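/- Let q be a prime power and let n_1 and n_2 be odd positive integers that are coprime to each other and to q. If all monic irreducible factors of x^{n_1} − 1 over F_{q^2} are SCRIM and x − 1 is the only SCRIM factor of x^{n_2} − 1 over F_{q^2}, then the number of SCRIM factors of x^{n_1 n_2} − 1 over F_{q^2} equals the number of SCRIM factors of x^{n_1} − 1 over F_{q^2}, i.e., |Ω_{q^2,n_1 n_2}| = |Ω_{q^2,n_1}|. -/

import Mathlib

open Polynomial

/-- The reciprocal polynomial `f*(x) = x^(deg f) * f(0)⁻¹ * f(1/x)`. -/
noncomputable def crecip {F : Type*} [Field F] (f : F[X]) : F[X] :=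
  C (f.coeff 0)⁻¹ * f.reverse

/-- The conjugate-reciprocal polynomial `f†`, obtained by applying the
conjugation `a ↦ a ^ q` to each coefficient of `f*`. -/
noncomputable def cdagger {F : Type*} [Field F] (q : ℕ) (f : F[X]) : F[X] :=
  (crecip f).sum fun i a => C (a ^ q) * X ^ i

/-- A polynomial is SCRIM if it is monic, irreducible, and self-conjugate-reciprocal. -/
def IsSCRIM {F : Type*} [Field F] (q : ℕ) (f : F[X]) : Prop :=
  f.Monic ∧ Irreducible f ∧ f = cdagger q f

/-- The set `Ω_{q²,n}` of SCRIM factors of `x^n - 1` over `F = F_{q²}`. -/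
def scrimFactors (F : Type*) [Field F] (q n : ℕ) : Set F[X] :=
  {f | IsSCRIM q f ∧ f ∣ X ^ n - 1}

/-! If `f` is SCRIM with root `α`, then `f = f†` also has the root `α⁻¹ ^ q`, so `α ↦ α⁻¹ ^ q`
defines an `F`-algebra endomorphism `σ` of `F(α)`. Every power `γ = α ^ m` satisfies
`σ γ = γ⁻¹ ^ q`, so `γ⁻¹ ^ q` is a root of `(minpoly F γ)†` with the same minimal polynomial as `γ`;
hence `minpoly F γ` divides, and so equals, its own conjugate-reciprocal: it is SCRIM.
If `f ∣ X ^ (n₁ n₂) - 1`, then `γ = α ^ n₁` is a root of `X ^ n₂ - 1`, so `minpoly F γ = X - 1`,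
`γ = 1` and `f ∣ X ^ n₁ - 1`. Thus `Ω_{q²,n₁n₂} = Ω_{q²,n₁}` as sets. -/

lemma AdjoinRoot.root_pow_eq_one_iff {R : Type*} [CommRing R] {f : R[X]} {n : ℕ} :
    AdjoinRoot.root f ^ n = 1 ↔ f ∣ X ^ n - 1 := by
  rw [← AdjoinRoot.mk_eq_zero, map_sub, map_pow, AdjoinRoot.mk_X, map_one, sub_eq_zero]

section

variable {F : Type*} [Field F] {f : F[X]}

lemma coeff_zero_ne_zero_of_eq_cdagger {q : ℕ} {g : F[X]} (hg : g ≠ 0) (h : g = cdagger q g) :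
    g.coeff 0 ≠ 0 := by
  intro h0
  rw [cdagger, crecip, h0, inv_zero, C_0, zero_mul, sum_zero_index] at h
  exact hg h

lemma crecip_monic {g : F[X]} (h0 : g.coeff 0 ≠ 0) : (crecip g).Monic := by
  have ht : g.natTrailingDegree = 0 := natTrailingDegree_eq_zero.mpr (Or.inr h0)
  rw [Monic, crecip, leadingCoeff_mul, leadingCoeff_C, reverse_leadingCoeff, trailingCoeff, ht]
  exact inv_mul_cancel₀ h0

lemma natDegree_crecip {g : F[X]} (h0 : g.coeff 0 ≠ 0) :
    (crecip g).natDegree = g.natDegree := by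
  have ht : g.natTrailingDegree = 0 := natTrailingDegree_eq_zero.mpr (Or.inr h0)
  rw [crecip, natDegree_C_mul_eq_of_mul_eq_one (mul_inv_cancel₀ h0), reverse_natDegree, ht,
    Nat.sub_zero]

lemma IsSCRIM.root_ne_zero {q : ℕ} [Fact (Irreducible f)] (hf : IsSCRIM q f) :
    AdjoinRoot.root f ≠ 0 := by
  intro h0
  have hroot : aeval (AdjoinRoot.root f) f = 0 := by rw [AdjoinRoot.aeval_eq, AdjoinRoot.mk_self]
  rw [h0, ← coeff_zero_eq_aeval_zero', map_eq_zero] at hroot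
  exact coeff_zero_ne_zero_of_eq_cdagger hf.1.ne_zero hf.2.2 hroot

variable (p : ℕ) [ExpChar F p] {k : ℕ}

lemma cdagger_eq_map_iterateFrobenius (g : F[X]) :
    cdagger (p ^ k) g = (crecip g).map (iterateFrobenius F p k) := by
  rw [cdagger, map, eval₂_eq_sum]
  simp only [RingHom.comp_apply, iterateFrobenius_def]

lemma aeval_cdagger_inv_pow_eq_zero {K : Type*} [Field K] [Algebra F K] {g : F[X]}
    {β : K} (hβ : β ≠ 0) (hg : aeval β g = 0) :
    aeval (β⁻¹ ^ p ^ k) (cdagger (p ^ k) g) = 0 := by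
  have := expChar_of_injective_algebraMap (algebraMap F K).injective p
  have : Invertible β := invertibleOfNonzero hβ
  have hcomm : (algebraMap F K).comp (iterateFrobenius F p k)
      = (iterateFrobenius K p k).comp (algebraMap F K) := by
    ext a
    simp [iterateFrobenius_def]
  have hrev : eval₂ (algebraMap F K) β⁻¹ g.reverse = 0 := by
    rw [← invOf_eq_inv β, eval₂_reverse_eq_zero_iff, ← aeval_def, hg]
  rw [cdagger_eq_map_iterateFrobenius, aeval_def, eval₂_map, hcomm, ← iterateFrobenius_def,
    ← hom_eval₂, crecip, eval₂_mul, eval₂_C, hrev, mul_zero, map_zero]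

lemma isSCRIM_minpoly {K : Type*} [Field K] [Algebra F K] (σ : K →ₐ[F] K) {γ : K}
    (hγ : IsIntegral F γ) (hγ0 : γ ≠ 0) (hσ : σ γ = γ⁻¹ ^ p ^ k) :
    IsSCRIM (p ^ k) (minpoly F γ) := by
  have hmon : (minpoly F γ).Monic := minpoly.monic hγ
  have h0 : (minpoly F γ).coeff 0 ≠ 0 := minpoly.coeff_zero_ne_zero hγ hγ0
  have hdag_monic : (cdagger (p ^ k) (minpoly F γ)).Monic := by
    rw [cdagger_eq_map_iterateFrobenius]
    exact (crecip_monic h0).map _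
  have hdag_deg : (cdagger (p ^ k) (minpoly F γ)).natDegree = (minpoly F γ).natDegree := by
    rw [cdagger_eq_map_iterateFrobenius, (crecip_monic h0).natDegree_map, natDegree_crecip h0]
  have hdvd : minpoly F γ ∣ cdagger (p ^ k) (minpoly F γ) := by
    have hmin : minpoly F (γ⁻¹ ^ p ^ k) = minpoly F γ := hσ ▸ minpoly.algHom_eq σ σ.injective γ
    have hroot := aeval_cdagger_inv_pow_eq_zero p (k := k) hγ0 (minpoly.aeval F γ)
    rwa [← hmin, ← minpoly.dvd_iff, hmin] at hroot
  exact ⟨hmon, minpoly.irreducible hγ,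
    (eq_of_monic_of_dvd_of_natDegree_le hmon hdag_monic hdvd hdag_deg.le).symm⟩

lemma IsSCRIM.exists_algHom_root [Fact (Irreducible f)] (hf : IsSCRIM (p ^ k) f) :
    ∃ σ : AdjoinRoot f →ₐ[F] AdjoinRoot f,
      σ (AdjoinRoot.root f) = (AdjoinRoot.root f)⁻¹ ^ p ^ k := by
  have hroot : aeval (AdjoinRoot.root f) f = 0 := by rw [AdjoinRoot.aeval_eq, AdjoinRoot.mk_self]
  have h := aeval_cdagger_inv_pow_eq_zero p (k := k) hf.root_ne_zero hroot
  rw [← hf.2.2] at h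
  exact ⟨AdjoinRoot.liftAlgHom f (Algebra.ofId F _) _ h, AdjoinRoot.liftAlgHom_root ..⟩

lemma IsSCRIM.dvd_X_pow_sub_one_of_dvd_mul (hf : IsSCRIM (p ^ k) f) {m n : ℕ}
    (hn : scrimFactors F (p ^ k) n ⊆ {X - 1}) (hdvd : f ∣ X ^ (m * n) - 1) :
    f ∣ X ^ m - 1 := by
  have : Fact (Irreducible f) := ⟨hf.2.1⟩
  obtain ⟨σ, hσ⟩ := hf.exists_algHom_root p
  set α := AdjoinRoot.root f
  have hγσ : σ (α ^ m) = (α ^ m)⁻¹ ^ p ^ k := by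
    rw [map_pow, hσ, ← inv_pow, ← pow_mul, ← pow_mul, mul_comm]
  have hγ : IsIntegral F (α ^ m) := (AdjoinRoot.isIntegral_root hf.1.ne_zero).pow m
  have hscrim := isSCRIM_minpoly p σ hγ (pow_ne_zero m hf.root_ne_zero) hγσ
  have hγn : minpoly F (α ^ m) ∣ X ^ n - 1 := minpoly.dvd F _ <| by
    rw [map_sub, map_pow, aeval_X, ← pow_mul, AdjoinRoot.root_pow_eq_one_iff.mpr hdvd, map_one,
      sub_self]
  have hmin : minpoly F (α ^ m) = X - 1 := hn ⟨hscrim, hγn⟩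
  have hγ1 := minpoly.aeval F (α ^ m)
  rw [hmin, map_sub, aeval_X, map_one, sub_eq_zero] at hγ1
  exact AdjoinRoot.root_pow_eq_one_iff.mp hγ1

theorem scrimFactors_mul_eq {m n : ℕ} (hn : scrimFactors F (p ^ k) n ⊆ {X - 1}) :
    scrimFactors F (p ^ k) (m * n) = scrimFactors F (p ^ k) m := by
  ext f
  exact ⟨fun ⟨hf, hdvd⟩ ↦ ⟨hf, hf.dvd_X_pow_sub_one_of_dvd_mul p hn hdvd⟩,
    fun ⟨hf, hdvd⟩ ↦ ⟨hf, hdvd.trans (pow_one_sub_dvd_pow_mul_sub_one X m n)⟩⟩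

end

theorem stmt8_general {q n₁ n₂ : ℕ}
    {F : Type*} [Field F] [Fintype F] (hF : Fintype.card F = q ^ 2)
    (hone₂ : scrimFactors F q n₂ = {X - 1}) :
    (scrimFactors F q (n₁ * n₂)).ncard = (scrimFactors F q n₁).ncard := by
  obtain ⟨p, _, n, hp, hcard⟩ := FiniteField.card' F
  have : Fact p.Prime := ⟨hp⟩
  have hq : q ∣ p ^ (n : ℕ) := hcard ▸ hF ▸ dvd_pow_self q two_ne_zero
  obtain ⟨k, -, rfl⟩ := (Nat.dvd_prime_pow hp).mp hq
  rw [scrimFactors_mul_eq p hone₂.subset]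

theorem stmt8 {q n₁ n₂ : ℕ} (hq : IsPrimePow q)
    {F : Type*} [Field F] [Fintype F] (hF : Fintype.card F = q ^ 2)
    (hn₁ : Odd n₁) (hn₂ : Odd n₂) (h12 : Nat.Coprime n₁ n₂)
    (h1q : Nat.Coprime n₁ q) (h2q : Nat.Coprime n₂ q)
    (hall₁ : ∀ f : F[X], f.Monic → Irreducible f → f ∣ X ^ n₁ - 1 → IsSCRIM q f)
    (hone₂ : scrimFactors F q n₂ = {X - 1}) :
    (scrimFactors F q (n₁ * n₂)).ncard = (scrimFactors F q n₁).ncard :=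
  stmt8_general hF hone₂
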